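/- arXiv:2210.00574 — 4 statements merged into one kernel-verified Lean document; each statement's English description precedes it below -/
import Mathlib

section
/- Let n ≥ 1 be an integer, let Ω ⊆ ℝⁿ be an open set, and let p : Ω × Ω → ℝ be measurable satisfying (P). Let s₀ ∈ (0,1) and let u : ℝⁿ → ℝ be continuously differentiable with compact support. Define F_s(x) := s(1−s) ∫_Ω |u(x)−u(y)|^{p(x,y)} / |x−y|^{n+s·p(x,y)} dy for x ∈ Ω and s ∈ (0,1). Then there exists a function F ∈ L¹(Ω) such that F_s(x) ≤ F(x) for every x ∈ Ω and every s ∈ [s₀, 1). -/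
/-!
Let `K ≥ 1` be such that `|u x - u y| ≤ K min(|x - y|, 1)` (`u` is Lipschitz and bounded). For
`s ∈ [s₀, 1)` the integrand is then at most `K^{p₊}` times the radial kernel equal to
`r^{(1-s)p₋ - n}` for `r ≤ 1` and to `r^{-(n + s₀p₋)}` for `r > 1`, evaluated at `r = |x - y|`.
In polar coordinates the kernel has integral `n |B₁| (1/((1-s)p₋) + 1/(s₀p₋))`, and the factor
`1 - s` in front of `F_s` absorbs the blow-up as `s → 1`, so `F_s` is bounded uniformly in `x` and
`s`. When `|x| > R + 1`, with `supp u ⊆ B_R`, only `y ∈ B_R` contribute and they lie at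
distance `> 1` from `x`, so `F_s(x) ≲ (|x| - R)^{-(n + s₀p₋)}`. Both bounds are dominated by a
multiple of `(1 + |x|)^{-(n + s₀p₋)}`, which is integrable on `ℝⁿ`.
-/

open MeasureTheory Metric Set Module
open scoped ENNReal

noncomputable def nearFarKernel (γ α r : ℝ) : ℝ := if r ≤ 1 then r ^ (-γ) else r ^ (-α)

lemma nearFarKernel_nonneg (γ α : ℝ) {r : ℝ} (hr : 0 ≤ r) : 0 ≤ nearFarKernel γ α r := by
  unfold nearFarKernel; split_ifs <;> positivity

lemma pow_pred_mul_rpow {y : ℝ} (hy : 0 < y) {d : ℕ} (hd : 1 ≤ d) (c : ℝ) :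
    y ^ (d - 1) * y ^ c = y ^ ((d : ℝ) - 1 + c) := by
  rw [← Real.rpow_natCast, ← Real.rpow_add hy, Nat.cast_sub hd, Nat.cast_one]

lemma integrableOn_Ioc_rpow {r : ℝ} (hr : -1 < r) :
    IntegrableOn (fun y : ℝ ↦ y ^ r) (Ioc 0 1) :=
  (intervalIntegrable_iff_integrableOn_Ioc_of_le zero_le_one).1
    (intervalIntegral.intervalIntegrable_rpow' hr)

lemma integral_Ioc_rpow {r : ℝ} (hr : -1 < r) : ∫ y in Ioc (0 : ℝ) 1, y ^ r = 1 / (r + 1) := by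
  rw [← intervalIntegral.integral_of_le zero_le_one, integral_rpow (.inl hr)]
  simp [(by linarith : r + 1 ≠ 0)]

section RadialIntegral

variable {d : ℕ} {γ α : ℝ}

lemma eqOn_Ioc_pow_pred_mul_nearFarKernel (hd : 1 ≤ d) :
    EqOn (fun y ↦ y ^ (d - 1) * nearFarKernel γ α y) (fun y ↦ y ^ ((d : ℝ) - 1 - γ)) (Ioc 0 1) :=
  fun y ⟨hy0, hy1⟩ ↦ by
    simp only [nearFarKernel, if_pos hy1, pow_pred_mul_rpow hy0 hd, sub_eq_add_neg]

lemma eqOn_Ioi_pow_pred_mul_nearFarKernel (hd : 1 ≤ d) :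
    EqOn (fun y ↦ y ^ (d - 1) * nearFarKernel γ α y) (fun y ↦ y ^ ((d : ℝ) - 1 - α)) (Ioi 1) :=
  fun y (hy : 1 < y) ↦ by
    simp only [nearFarKernel, if_neg hy.not_ge, pow_pred_mul_rpow (one_pos.trans hy) hd,
      sub_eq_add_neg]

lemma integrableOn_Ioi_pow_pred_mul_nearFarKernel (hd : 1 ≤ d) (hγ : γ < d) (hα : d < α) :
    IntegrableOn (fun y ↦ y ^ (d - 1) * nearFarKernel γ α y) (Ioi 0) := by
  rw [← Ioc_union_Ioi_eq_Ioi zero_le_one]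
  refine IntegrableOn.union ?_ ?_
  · exact (integrableOn_Ioc_rpow (by linarith)).congr_fun
      (eqOn_Ioc_pow_pred_mul_nearFarKernel hd).symm measurableSet_Ioc
  · exact (integrableOn_Ioi_rpow_of_lt (by linarith) one_pos).congr_fun
      (eqOn_Ioi_pow_pred_mul_nearFarKernel hd).symm measurableSet_Ioi

lemma integral_Ioi_pow_pred_mul_nearFarKernel (hd : 1 ≤ d) (hγ : γ < d) (hα : d < α) :
    ∫ y in Ioi 0, y ^ (d - 1) * nearFarKernel γ α y = 1 / (d - γ) + 1 / (α - d) := by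
  have hint := integrableOn_Ioi_pow_pred_mul_nearFarKernel hd hγ hα
  rw [← Ioc_union_Ioi_eq_Ioi zero_le_one] at hint ⊢
  rw [setIntegral_union Ioc_disjoint_Ioi_same measurableSet_Ioi
      (hint.mono_set subset_union_left) (hint.mono_set subset_union_right),
    setIntegral_congr_fun measurableSet_Ioc (eqOn_Ioc_pow_pred_mul_nearFarKernel hd),
    setIntegral_congr_fun measurableSet_Ioi (eqOn_Ioi_pow_pred_mul_nearFarKernel hd),
    integral_Ioc_rpow (by linarith), integral_Ioi_rpow_of_lt (by linarith) one_pos,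
    Real.one_rpow]
  congr 1
  · ring_nf
  · rw [neg_div, ← div_neg]; ring_nf

end RadialIntegral

lemma rpow_div_rpow_le_nearFarKernel {a r K q pm pp s₀ s d : ℝ} (ha : 0 ≤ a) (hr : 0 ≤ r)
    (hK : 1 ≤ K) (haK : a ≤ K * min r 1) (hpm : 0 < pm) (hq : pm ≤ q) (hqpp : q ≤ pp)
    (hs₀ : 0 ≤ s₀) (hs : s₀ ≤ s) (hs1 : s ≤ 1) :
    a ^ q / r ^ (d + s * q) ≤ K ^ pp * nearFarKernel (d - (1 - s) * pm) (d + s₀ * pm) r := by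
  have hq0 : 0 < q := hpm.trans_le hq
  have hKq : K ^ q ≤ K ^ pp := Real.rpow_le_rpow_of_exponent_le hK hqpp
  rcases hr.eq_or_lt with rfl | hr0
  · have ha0 : a = 0 := le_antisymm (by simpa using haK) ha
    rw [ha0, Real.zero_rpow hq0.ne', zero_div]
    exact mul_nonneg (by positivity) (nearFarKernel_nonneg _ _ le_rfl)
  unfold nearFarKernel
  split_ifs with hr1
  · have har : a ≤ K * r := haK.trans_eq (by rw [min_eq_left hr1])
    calc a ^ q / r ^ (d + s * q) ≤ (K * r) ^ q / r ^ (d + s * q) := by gcongr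
      _ = K ^ q * r ^ (-(d - (1 - s) * q)) := by
        rw [Real.mul_rpow (by positivity) hr0.le, mul_div_assoc, ← Real.rpow_sub hr0]
        ring_nf
      _ ≤ K ^ pp * r ^ (-(d - (1 - s) * pm)) :=
        mul_le_mul hKq (Real.rpow_le_rpow_of_exponent_ge hr0 hr1 (by nlinarith)) (by positivity)
          (by positivity)
  · have har : a ≤ K := haK.trans_eq (by rw [min_eq_right (not_le.1 hr1).le, mul_one])
    calc a ^ q / r ^ (d + s * q) ≤ K ^ q * r ^ (-(d + s * q)) := by
          rw [Real.rpow_neg hr0.le, ← div_eq_mul_inv]; gcongr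
      _ ≤ K ^ pp * r ^ (-(d + s₀ * pm)) :=
        mul_le_mul hKq (Real.rpow_le_rpow_of_exponent_le (not_le.1 hr1).le (by nlinarith))
          (by positivity) (by positivity)

lemma mul_one_sub_mul_add_le {s₀ s pm : ℝ} (hs₀ : 0 < s₀) (hs : s₀ ≤ s) (hs1 : s < 1)
    (hpm : 0 < pm) :
    s * (1 - s) * (1 / ((1 - s) * pm) + 1 / (s₀ * pm)) ≤ 1 / pm + 1 / (s₀ * pm) := by
  have hnear : s * (1 - s) * (1 / ((1 - s) * pm)) = s * (1 / pm) := by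
    field_simp [(by linarith : (1 - s) ≠ 0)]
  have hss : s * (1 - s) ≤ 1 := by nlinarith
  rw [mul_add, hnear]
  exact add_le_add (mul_le_of_le_one_left (by positivity) hs1.le)
    (mul_le_of_le_one_left (by positivity) hss)

lemma le_ofReal_mul_one_add_rpow_neg {g : ℝ≥0∞} {t R T B α : ℝ} (hR : 0 ≤ R) (ht : 0 ≤ t)
    (hα : 0 ≤ α) (hB : 0 ≤ B) (hnear : g ≤ ENNReal.ofReal T)
    (hfar : R + 1 < t → g ≤ ENNReal.ofReal (B * (t - R) ^ (-α))) :
    g ≤ ENNReal.ofReal ((R + 2) ^ α * max T B * (1 + t) ^ (-α)) := by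
  have hscale : (R + 2) ^ α * (1 + t) ^ (-α) = ((1 + t) / (R + 2)) ^ (-α) := by
    rw [Real.div_rpow (by linarith) (by linarith), Real.rpow_neg (by linarith : (0:ℝ) ≤ R + 2),
      div_inv_eq_mul, mul_comm]
  rw [mul_comm _ (max T B), mul_assoc, hscale]
  by_cases hfar' : R + 1 < t
  · refine (hfar hfar').trans (ENNReal.ofReal_le_ofReal ?_)
    exact mul_le_mul (le_max_right _ _) (Real.rpow_le_rpow_of_nonpos (by positivity)
      ((div_le_iff₀ (by linarith)).2 (by nlinarith)) (by linarith))
      (Real.rpow_nonneg (by linarith) _) (hB.trans (le_max_right _ _))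
  · refine hnear.trans (ENNReal.ofReal_le_ofReal ?_)
    calc T ≤ max T B * 1 := by rw [mul_one]; exact le_max_left _ _
      _ ≤ max T B * ((1 + t) / (R + 2)) ^ (-α) := by
        gcongr
        exact Real.one_le_rpow_of_pos_of_le_one_of_nonpos (by positivity)
          ((div_le_one (by linarith)).2 (by linarith)) (by linarith)

lemma LipschitzWith.exists_abs_sub_le_mul_min {α : Type*} [SeminormedAddCommGroup α] {u : α → ℝ}
    {L : NNReal} (hL : LipschitzWith L u) {M : ℝ} (hM : ∀ a, ‖u a‖ ≤ M) :
    ∃ K, 1 ≤ K ∧ ∀ a b, |u a - u b| ≤ K * min ‖a - b‖ 1 := by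
  refine ⟨max (L : ℝ) (2 * M) + 1, by linarith [le_max_left (L : ℝ) (2 * M), L.coe_nonneg],
    fun a b ↦ ?_⟩
  rcases le_total ‖a - b‖ 1 with hab | hab
  · rw [min_eq_left hab]
    calc |u a - u b| ≤ L * ‖a - b‖ := by
          simpa [Real.dist_eq, dist_eq_norm] using hL.dist_le_mul a b
      _ ≤ (max (L : ℝ) (2 * M) + 1) * ‖a - b‖ := by
          gcongr; linarith [le_max_left (L : ℝ) (2 * M)]
  · rw [min_eq_right hab, mul_one]
    calc |u a - u b| ≤ ‖u a‖ + ‖u b‖ := by simpa using _root_.norm_sub_le (u a) (u b)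
      _ ≤ max (L : ℝ) (2 * M) + 1 := by linarith [hM a, hM b, le_max_right (L : ℝ) (2 * M)]

section Gagliardo

variable {E : Type*} [NormedAddCommGroup E]

noncomputable def gagliardoQuotient (u : E → ℝ) (p : E → E → ℝ) (d s : ℝ) (x y : E) : ℝ :=
  |u x - u y| ^ p x y / ‖x - y‖ ^ (d + s * p x y)

lemma gagliardoQuotient_eq_zero {u : E → ℝ} {p : E → E → ℝ} {d s : ℝ} {x y : E}
    (hx : u x = 0) (hy : u y = 0) (hp : 0 < p x y) : gagliardoQuotient u p d s x y = 0 := by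
  rw [gagliardoQuotient, hx, hy, sub_zero, abs_zero, Real.zero_rpow hp.ne', zero_div]

variable [NormedSpace ℝ E] [FiniteDimensional ℝ E] [MeasurableSpace E] [BorelSpace E]
  (μ : Measure E) [μ.IsAddHaarMeasure]

lemma integrable_nearFarKernel_norm [Nontrivial E] {γ α : ℝ} (hγ : γ < finrank ℝ E)
    (hα : finrank ℝ E < α) : Integrable (fun z : E ↦ nearFarKernel γ α ‖z‖) μ :=
  (integrable_fun_norm_addHaar μ).2 <|
    integrableOn_Ioi_pow_pred_mul_nearFarKernel finrank_pos hγ hα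

lemma lintegral_nearFarKernel_norm [Nontrivial E] {γ α : ℝ} (hγ : γ < finrank ℝ E)
    (hα : finrank ℝ E < α) :
    ∫⁻ z : E, ENNReal.ofReal (nearFarKernel γ α ‖z‖) ∂μ =
      ENNReal.ofReal (finrank ℝ E * μ.real (ball 0 1) *
        (1 / (finrank ℝ E - γ) + 1 / (α - finrank ℝ E))) := by
  rw [← ofReal_integral_eq_lintegral_ofReal (integrable_nearFarKernel_norm μ hγ hα)
      (ae_of_all _ fun z ↦ nearFarKernel_nonneg γ α (norm_nonneg z)),
    integral_fun_norm_addHaar μ (nearFarKernel γ α), smul_eq_mul, nsmul_eq_mul, mul_assoc]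
  simp only [smul_eq_mul]
  rw [integral_Ioi_pow_pred_mul_nearFarKernel finrank_pos hγ hα]

variable {Ω : Set E} {u : E → ℝ} {p : E → E → ℝ} {x : E} {K pm pp s₀ s : ℝ}

lemma lintegral_gagliardoQuotient_le [Nontrivial E] (hΩ : MeasurableSet Ω) (hK : 1 ≤ K)
    (hu : ∀ y, |u x - u y| ≤ K * min ‖x - y‖ 1) (hpm : 0 < pm)
    (hp : ∀ y ∈ Ω, pm ≤ p x y ∧ p x y ≤ pp) (hs₀ : 0 < s₀) (hs : s₀ ≤ s) (hs1 : s < 1) :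
    ∫⁻ y in Ω, ENNReal.ofReal (gagliardoQuotient u p (finrank ℝ E) s x y) ∂μ ≤
      ENNReal.ofReal (K ^ pp * (finrank ℝ E * μ.real (ball 0 1) *
        (1 / ((1 - s) * pm) + 1 / (s₀ * pm)))) := by
  set d : ℝ := (finrank ℝ E : ℝ)
  set k := nearFarKernel (d - (1 - s) * pm) (d + s₀ * pm)
  have hk : ∫⁻ z : E, ENNReal.ofReal (k ‖z‖) ∂μ =
      ENNReal.ofReal (d * μ.real (ball 0 1) * (1 / ((1 - s) * pm) + 1 / (s₀ * pm))) := by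
    rw [lintegral_nearFarKernel_norm μ (by nlinarith) (by nlinarith), sub_sub_cancel,
      add_sub_cancel_left]
  calc ∫⁻ y in Ω, ENNReal.ofReal (gagliardoQuotient u p d s x y) ∂μ
      ≤ ∫⁻ y in Ω, ENNReal.ofReal (K ^ pp * k ‖x - y‖) ∂μ :=
        setLIntegral_mono' hΩ fun y hy ↦ ENNReal.ofReal_le_ofReal <|
          rpow_div_rpow_le_nearFarKernel (abs_nonneg _) (norm_nonneg _) hK (hu y) hpm
            (hp y hy).1 (hp y hy).2 hs₀.le hs hs1.le
    _ ≤ ∫⁻ y, ENNReal.ofReal (K ^ pp * k ‖x - y‖) ∂μ := setLIntegral_le_lintegral _ _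
    _ = ∫⁻ z, ENNReal.ofReal (K ^ pp * k ‖z‖) ∂μ :=
        lintegral_sub_left_eq_self (fun z ↦ ENNReal.ofReal (K ^ pp * k ‖z‖)) x
    _ = _ := by
        simp_rw [ENNReal.ofReal_mul (by positivity : 0 ≤ K ^ pp)]
        rw [lintegral_const_mul' _ _ ENNReal.ofReal_ne_top, hk]

lemma ofReal_mul_lintegral_gagliardoQuotient_le [Nontrivial E] (hΩ : MeasurableSet Ω)
    (hK : 1 ≤ K) (hu : ∀ y, |u x - u y| ≤ K * min ‖x - y‖ 1) (hpm : 0 < pm)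
    (hp : ∀ y ∈ Ω, pm ≤ p x y ∧ p x y ≤ pp) (hs₀ : 0 < s₀) (hs : s₀ ≤ s) (hs1 : s < 1) :
    ENNReal.ofReal (s * (1 - s)) *
        ∫⁻ y in Ω, ENNReal.ofReal (gagliardoQuotient u p (finrank ℝ E) s x y) ∂μ ≤
      ENNReal.ofReal (K ^ pp * (finrank ℝ E * μ.real (ball 0 1) * (1 / pm + 1 / (s₀ * pm)))) := by
  have hs0 : 0 ≤ s * (1 - s) := mul_nonneg (by linarith) (by linarith)
  grw [lintegral_gagliardoQuotient_le μ hΩ hK hu hpm hp hs₀ hs hs1, ← ENNReal.ofReal_mul hs0]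
  refine ENNReal.ofReal_le_ofReal ?_
  have := mul_one_sub_mul_add_le hs₀ hs hs1 hpm
  calc s * (1 - s) * (K ^ pp * (finrank ℝ E * μ.real (ball 0 1) *
        (1 / ((1 - s) * pm) + 1 / (s₀ * pm))))
      = K ^ pp * (finrank ℝ E * μ.real (ball 0 1)) *
        (s * (1 - s) * (1 / ((1 - s) * pm) + 1 / (s₀ * pm))) := by ring
    _ ≤ K ^ pp * (finrank ℝ E * μ.real (ball 0 1)) * (1 / pm + 1 / (s₀ * pm)) := by gcongr
    _ = _ := by ring

lemma lintegral_gagliardoQuotient_le_of_far {d R : ℝ} (hΩ : MeasurableSet Ω) (hK : 1 ≤ K)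
    (hu : ∀ y, |u x - u y| ≤ K * min ‖x - y‖ 1) (hR : ∀ y, R < ‖y‖ → u y = 0)
    (hx : R + 1 < ‖x‖) (hpm : 0 < pm) (hp : ∀ y ∈ Ω, pm ≤ p x y ∧ p x y ≤ pp) (hd : 0 ≤ d)
    (hs₀ : 0 ≤ s₀) (hs : s₀ ≤ s) (hs1 : s ≤ 1) :
    ∫⁻ y in Ω, ENNReal.ofReal (gagliardoQuotient u p d s x y) ∂μ ≤
      ENNReal.ofReal (K ^ pp * μ.real (closedBall 0 R) * (‖x‖ - R) ^ (-(d + s₀ * pm))) := by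
  set c := K ^ pp * (‖x‖ - R) ^ (-(d + s₀ * pm))
  have hc : 0 ≤ c := by
    have : 0 < ‖x‖ - R := by linarith
    positivity
  have hpointwise : ∀ y ∈ Ω, ENNReal.ofReal (gagliardoQuotient u p d s x y) ≤
      (closedBall 0 R).indicator (fun _ ↦ ENNReal.ofReal c) y := by
    intro y hyΩ
    by_cases hy : ‖y‖ ≤ R
    · rw [indicator_of_mem (mem_closedBall_zero_iff.2 hy)]
      refine ENNReal.ofReal_le_ofReal ((rpow_div_rpow_le_nearFarKernel (abs_nonneg _)
        (norm_nonneg _) hK (hu y) hpm (hp y hyΩ).1 (hp y hyΩ).2 hs₀ hs hs1).trans ?_)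
      have hxy : ‖x‖ - R ≤ ‖x - y‖ := by linarith [norm_sub_norm_le x y]
      rw [nearFarKernel, if_neg (by linarith)]
      exact mul_le_mul_of_nonneg_left
        (Real.rpow_le_rpow_of_nonpos (by linarith) hxy (by nlinarith)) (by positivity)
    · rw [gagliardoQuotient_eq_zero (hR x (by linarith)) (hR y (not_le.1 hy))
        (hpm.trans_le (hp y hyΩ).1), ENNReal.ofReal_zero]
      exact zero_le
  calc ∫⁻ y in Ω, ENNReal.ofReal (gagliardoQuotient u p d s x y) ∂μ
      ≤ ∫⁻ y in Ω, (closedBall 0 R).indicator (fun _ ↦ ENNReal.ofReal c) y ∂μ :=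
        setLIntegral_mono' hΩ hpointwise
    _ ≤ ∫⁻ y, (closedBall 0 R).indicator (fun _ ↦ ENNReal.ofReal c) y ∂μ :=
        setLIntegral_le_lintegral _ _
    _ = ENNReal.ofReal (K ^ pp * μ.real (closedBall 0 R) * (‖x‖ - R) ^ (-(d + s₀ * pm))) := by
        rw [lintegral_indicator_const measurableSet_closedBall, mul_right_comm,
          ENNReal.ofReal_mul hc, ofReal_measureReal measure_closedBall_lt_top.ne]

end Gagliardo

theorem dominating_function_exists_general
    (n : ℕ) (hn : 1 ≤ n)
    (Ω : Set (EuclideanSpace ℝ (Fin n))) (hΩ : IsOpen Ω)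
    (p : EuclideanSpace ℝ (Fin n) → EuclideanSpace ℝ (Fin n) → ℝ)
    (pm pp : ℝ) (hpm : 1 < pm)
    (hp_bound : ∀ x ∈ Ω, ∀ y ∈ Ω, pm ≤ p x y ∧ p x y ≤ pp)
    (s₀ : ℝ) (hs₀ : s₀ ∈ Set.Ioo (0 : ℝ) 1)
    (u : EuclideanSpace ℝ (Fin n) → ℝ)
    (hu : ContDiff ℝ 1 u) (hu_supp : HasCompactSupport u) :
    ∃ F : EuclideanSpace ℝ (Fin n) → ℝ, IntegrableOn F Ω volume ∧
      ∀ x ∈ Ω, ∀ s : ℝ, s₀ ≤ s → s < 1 →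
        ENNReal.ofReal (s * (1 - s)) *
            (∫⁻ y in Ω, ENNReal.ofReal
              (|u x - u y| ^ p x y / ‖x - y‖ ^ ((n : ℝ) + s * p x y))) ≤
          ENNReal.ofReal (F x) := by
  have hd : (finrank ℝ (EuclideanSpace ℝ (Fin n)) : ℝ) = n := by simp
  have : Nontrivial (EuclideanSpace ℝ (Fin n)) :=
    nontrivial_of_finrank_pos (R := ℝ) (by rw [finrank_euclideanSpace_fin]; exact hn)
  obtain ⟨L, hL⟩ := hu.lipschitzWith_of_hasCompactSupport hu_supp one_ne_zero
  obtain ⟨M, hM⟩ := hu.continuous.bounded_above_of_compact_support hu_supp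
  obtain ⟨K, hK, huK⟩ := hL.exists_abs_sub_le_mul_min hM
  obtain ⟨R, hR, hsuppR⟩ := hu_supp.isBounded.subset_closedBall_lt 0 0
  have hu_zero : ∀ y, R < ‖y‖ → u y = 0 := fun y hy ↦ image_eq_zero_of_notMem_tsupport
    fun hy' ↦ (mem_closedBall_zero_iff.1 (hsuppR hy')).not_gt hy
  set T := K ^ pp * (n * volume.real (ball (0 : EuclideanSpace ℝ (Fin n)) 1) *
    (1 / pm + 1 / (s₀ * pm)))
  set B := K ^ pp * volume.real (closedBall (0 : EuclideanSpace ℝ (Fin n)) R)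
  refine ⟨fun x ↦ (R + 2) ^ (n + s₀ * pm) * max T B * (1 + ‖x‖) ^ (-(n + s₀ * pm)),
    ((integrable_one_add_norm (by rw [hd]; nlinarith [hs₀.1])).const_mul _).integrableOn,
    fun x hx s hs hs1 ↦ ?_⟩
  refine le_ofReal_mul_one_add_rpow_neg hR.le (norm_nonneg x) (by nlinarith [hs₀.1])
    (by positivity) ?_ fun hxR ↦ ?_
  · have hnear := ofReal_mul_lintegral_gagliardoQuotient_le volume hΩ.measurableSet hK (huK x)
      (by linarith) (hp_bound x hx) hs₀.1 hs hs1
    rw [hd] at hnear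
    exact hnear
  · have hss : s * (1 - s) ≤ 1 := by nlinarith [hs₀.1]
    exact (mul_le_of_le_one_left zero_le (ENNReal.ofReal_le_one.2 hss)).trans
      (lintegral_gagliardoQuotient_le_of_far volume hΩ.measurableSet hK (huK x) hu_zero hxR
        (by linarith) (hp_bound x hx) n.cast_nonneg hs₀.1.le hs hs1.le)

/-- **Lemma 3.3 (domination)**: for `u ∈ C¹_c(ℝⁿ)` and `s₀ ∈ (0,1)` there is `F ∈ L¹(Ω)`
dominating `F_s(x) = s(1-s) ∫_Ω |u(x)-u(y)|^{p(x,y)}/|x-y|^{n+sp(x,y)} dy` for all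
`x ∈ Ω` and `s ∈ [s₀,1)`. -/
theorem dominating_function_exists
    (n : ℕ) (hn : 1 ≤ n)
    (Ω : Set (EuclideanSpace ℝ (Fin n))) (hΩ : IsOpen Ω)
    (p : EuclideanSpace ℝ (Fin n) → EuclideanSpace ℝ (Fin n) → ℝ)
    (hp_meas : Measurable (Function.uncurry p))
    (pm pp : ℝ) (hpm : 1 < pm) (hpmpp : pm ≤ pp)
    (hp_bound : ∀ x ∈ Ω, ∀ y ∈ Ω, pm ≤ p x y ∧ p x y ≤ pp)
    (s₀ : ℝ) (hs₀ : s₀ ∈ Set.Ioo (0 : ℝ) 1)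
    (u : EuclideanSpace ℝ (Fin n) → ℝ)
    (hu : ContDiff ℝ 1 u) (hu_supp : HasCompactSupport u) :
    ∃ F : EuclideanSpace ℝ (Fin n) → ℝ, IntegrableOn F Ω volume ∧
      ∀ x ∈ Ω, ∀ s : ℝ, s₀ ≤ s → s < 1 →
        ENNReal.ofReal (s * (1 - s)) *
            (∫⁻ y in Ω, ENNReal.ofReal
              (|u x - u y| ^ p x y / ‖x - y‖ ^ ((n : ℝ) + s * p x y))) ≤
          ENNReal.ofReal (F x) :=
  dominating_function_exists_general n hn Ω hΩ p pm pp hpm hp_bound s₀ hs₀ u hu hu_supp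
end

section
/- Let n ≥ 2 be an integer and let Ω ⊆ ℝⁿ be an open set containing the closed ball B̄₂ of radius 2 centered at the origin. Then there exist a smooth function p : Ω × Ω → ℝ satisfying (P) with p̄(x) := p(x,x) constant, and a function u : Ω → ℝ, smooth on Ω \ {0}, such that: (i) ∫_Ω |u(x)|^{p̄} dx < ∞ and ∫_{Ω\{0}} |∇u(x)|^{p̄} dx < ∞ (so u ∈ W^{1,p̄}(Ω)); and (ii) for every s ∈ (0,1) and every λ > 0, s(1−s) ∫_Ω ∫_Ω |u(x)/λ − u(y)/λ|^{p(x,y)} / |x−y|^{n+s·p(x,y)} dy dx = +∞ (so u ∉ W^{s,p(·,·)}(Ω) for every s ∈ (0,1)). -/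
open MeasureTheory Filter Metric Set
open scoped ENNReal Topology

/-- The constant `K_{n,p} = 2 π^{(n-1)/2} Γ((p+1)/2) / (p Γ((n+p)/2))`. -/
noncomputable def Kconst (n : ℕ) (q : ℝ) : ℝ :=
  2 * Real.pi ^ (((n : ℝ) - 1) / 2) * Real.Gamma ((q + 1) / 2) /
    (q * Real.Gamma (((n : ℝ) + q) / 2))

/-- The modular `ϱ_{s,p}(u) = s(1-s) ∫_Ω ∫_Ω |u(x)-u(y)|^{p(x,y)} / |x-y|^{n+s p(x,y)} dy dx`,
as a Lebesgue integral with values in `[0,∞]`. -/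
noncomputable def varModular (n : ℕ) (Ω : Set (EuclideanSpace ℝ (Fin n)))
    (p : EuclideanSpace ℝ (Fin n) → EuclideanSpace ℝ (Fin n) → ℝ) (s : ℝ)
    (u : EuclideanSpace ℝ (Fin n) → ℝ) : ℝ≥0∞ :=
  ENNReal.ofReal (s * (1 - s)) *
    ∫⁻ x in Ω, ∫⁻ y in Ω,
      ENNReal.ofReal (|u x - u y| ^ p x y / ‖x - y‖ ^ ((n : ℝ) + s * p x y))


/-!
Take `u = φ · ‖x‖^(-1/2)` with `φ` a smooth cut-off near the origin, and
`p(x, y) = 6/5 + (2n - 6/5) φ(x) χ(y)` with `χ` a cut-off near a point `a`, `‖a‖ = 3/2`.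
The supports of `φ` and `χ` are disjoint, so `p(x, x) = 6/5`; then `|u|^(6/5) ≲ ‖x‖^(-3/5)` and
`|∇u|^(6/5) ≲ ‖x‖^(-9/5)` are integrable since `9/5 < 2 ≤ n`. For `x` near `0` and `y` near `a`,
however, `p(x, y) = 2n`, so `|u(x) - u(y)|^p(x,y) = ‖x‖^(-n)` while `‖x - y‖ ≤ 2`: the Gagliardo
modular dominates a multiple of `∫_{B(0,1/4)} ‖x‖^(-n) dx = ∞`, whatever `s` and `λ`.
-/

section PowerSingularity

variable {E : Type*} [NormedAddCommGroup E] [NormedSpace ℝ E] [FiniteDimensional ℝ E]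
  [MeasurableSpace E] [BorelSpace E] [Nontrivial E] (μ : Measure E) [μ.IsAddHaarMeasure]

theorem integrableOn_ball_norm_rpow_neg_iff {r α : ℝ} (hr : 0 < r) :
    IntegrableOn (fun x : E => ‖x‖ ^ (-α)) (ball 0 r) μ ↔ α < Module.finrank ℝ E := by
  have hexp : α < Module.finrank ℝ E ↔ -1 < (Module.finrank ℝ E : ℝ) - 1 - α := by
    constructor <;> intro <;> linarith
  rw [integrableOn_fun_norm_addHaar μ (f := fun t => t ^ (-α)), hexp,
    ← intervalIntegral.integrableOn_Ioo_rpow_iff hr]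
  refine integrableOn_congr_fun (fun t ht => ?_) measurableSet_Ioo
  rw [smul_eq_mul, ← Real.rpow_natCast, ← Real.rpow_add ht.1, Nat.cast_sub Module.finrank_pos,
    Nat.cast_one, sub_eq_add_neg _ α]

theorem setLIntegral_ball_norm_rpow_neg_finrank_eq_top {r c : ℝ} (hr : 0 < r) (hc : 0 < c) :
    ∫⁻ x in ball (0 : E) r, ENNReal.ofReal (c * ‖x‖ ^ (-(Module.finrank ℝ E : ℝ))) ∂μ = ⊤ := by
  by_contra hfin
  have hint : IntegrableOn (fun x : E => c * ‖x‖ ^ (-(Module.finrank ℝ E : ℝ))) (ball 0 r) μ :=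
    ⟨((measurable_norm.pow_const _).const_mul c).aestronglyMeasurable,
      (hasFiniteIntegral_iff_ofReal (.of_forall fun x => by positivity)).2
        (lt_top_iff_ne_top.2 hfin)⟩
  exact lt_irrefl _ <| (integrableOn_ball_norm_rpow_neg_iff μ hr).1 <|
    IntegrableOn.congr_fun (hint.const_mul c⁻¹) (fun x _ => by simp [hc.ne']) measurableSet_ball

theorem lintegral_lt_top_of_le_norm_rpow_neg {f : E → ℝ≥0∞} {C α r : ℝ}
    (hα : α < Module.finrank ℝ E) (hr : 0 < r)
    (hbound : ∀ x, x ≠ 0 → ‖x‖ < r → f x ≤ ENNReal.ofReal (C * ‖x‖ ^ (-α)))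
    (hvanish : ∀ x, r ≤ ‖x‖ → f x = 0) :
    ∫⁻ x, f x ∂μ < ⊤ := by
  have hle : f ≤ᵐ[μ] (ball (0 : E) r).indicator fun x => ENNReal.ofReal (C * ‖x‖ ^ (-α)) := by
    filter_upwards [measure_singleton (μ := μ) 0 |> compl_mem_ae_iff.2] with x hx
    by_cases hxr : ‖x‖ < r
    · simpa [indicator_of_mem (mem_ball_zero_iff.2 hxr)] using hbound x hx hxr
    · simp [hvanish x (not_lt.1 hxr)]
  calc ∫⁻ x, f x ∂μ
      ≤ ∫⁻ x in ball (0 : E) r, ENNReal.ofReal (C * ‖x‖ ^ (-α)) ∂μ := by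
        rw [← lintegral_indicator measurableSet_ball]; exact lintegral_mono_ae hle
    _ < ⊤ := (((integrableOn_ball_norm_rpow_neg_iff μ hr).2 hα).const_mul C).lintegral_lt_top

end PowerSingularity

theorem norm_fderiv_mul_le {E : Type*} [NormedAddCommGroup E] [NormedSpace ℝ E] {f g : E → ℝ}
    {x : E} (hf : DifferentiableAt ℝ f x) (hg : DifferentiableAt ℝ g x) :
    ‖fderiv ℝ (fun y => f y * g y) x‖ ≤ |f x| * ‖fderiv ℝ g x‖ + |g x| * ‖fderiv ℝ f x‖ := by
  rw [fderiv_fun_mul hf hg]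
  exact (norm_add_le _ _).trans_eq
    (by rw [norm_smul, norm_smul, Real.norm_eq_abs, Real.norm_eq_abs])

section InnerProduct

variable {E : Type*} [NormedAddCommGroup E] [InnerProductSpace ℝ E]

theorem norm_fderiv_norm_rpow_le_of_ne_zero {x : E} (hx : x ≠ 0) (a : ℝ) :
    ‖fderiv ℝ (fun y : E => ‖y‖ ^ a) x‖ ≤ |a| * ‖x‖ ^ (a - 1) := by
  have hpow : HasDerivAt (fun t : ℝ => t ^ a) (a * ‖x‖ ^ (a - 1)) ‖x‖ :=
    Real.hasDerivAt_rpow_const (Or.inl (norm_ne_zero_iff.2 hx))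
  have hnorm : HasFDerivAt (‖·‖) (fderiv ℝ (‖·‖) x) x :=
    ((contDiffAt_norm ℝ hx).differentiableAt (n := 1) one_ne_zero).hasFDerivAt
  have hcomp : HasFDerivAt (fun y : E => ‖y‖ ^ a) ((a * ‖x‖ ^ (a - 1)) • fderiv ℝ (‖·‖) x) x :=
    hpow.comp_hasFDerivAt x hnorm
  rw [hcomp.fderiv, norm_smul, Real.norm_eq_abs, abs_mul,
    abs_of_nonneg (Real.rpow_nonneg (norm_nonneg x) _)]
  exact mul_le_of_le_one_right (by positivity)
    (by simpa using norm_fderiv_le_of_lipschitz ℝ (lipschitzWith_one_norm (E := E)) (x₀ := x))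

theorem norm_gradient_eq_norm_fderiv [CompleteSpace E] (f : E → ℝ) (x : E) :
    ‖gradient f x‖ = ‖fderiv ℝ f x‖ :=
  (InnerProductSpace.toDual ℝ E).symm.norm_map _

end InnerProduct

section Construction

variable {E : Type*} [NormedAddCommGroup E] [InnerProductSpace ℝ E]

noncomputable def standardBump (c : E) : ContDiffBump c := ⟨1/4, 1/2, by norm_num, by norm_num⟩

theorem standardBump_eq_one {c x : E} (hx : x ∈ ball c (1/4)) : standardBump c x = 1 :=
  (standardBump c).one_of_mem_closedBall (ball_subset_closedBall hx)

theorem standardBump_eq_zero {c x : E} (hx : 1/2 ≤ dist x c) : standardBump c x = 0 :=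
  (standardBump c).zero_of_le_dist hx

theorem standardBump_zero_mul_standardBump_eq_zero {a : E} (ha : 1 ≤ ‖a‖) (x : E) :
    standardBump (0 : E) x * standardBump a x = 0 := by
  rcases le_or_gt (1/2) ‖x‖ with hx | hx
  · rw [standardBump_eq_zero (by rwa [dist_zero_right]), zero_mul]
  · have : 1/2 ≤ dist x a := by
      have := norm_sub_norm_le a x
      rw [dist_eq_norm, norm_sub_rev]
      linarith
    rw [standardBump_eq_zero this, mul_zero]

noncomputable def bumpExponent (q₀ q₁ : ℝ) (a x y : E) : ℝ :=
  q₀ + (q₁ - q₀) * (standardBump (0 : E) x * standardBump a y)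

variable {q₀ q₁ : ℝ} {a : E}

theorem contDiff_bumpExponent {k : ℕ∞} :
    ContDiff ℝ k (Function.uncurry (bumpExponent q₀ q₁ a)) :=
  contDiff_const.add <| contDiff_const.mul <|
    ((standardBump 0).contDiff.comp contDiff_fst).mul ((standardBump a).contDiff.comp contDiff_snd)

theorem bumpExponent_mem_Icc (h : q₀ ≤ q₁) (x y : E) : bumpExponent q₀ q₁ a x y ∈ Icc q₀ q₁ := by
  have h0 : 0 ≤ standardBump (0 : E) x * standardBump a y :=
    mul_nonneg (ContDiffBump.nonneg _) (ContDiffBump.nonneg _)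
  have h1 : standardBump (0 : E) x * standardBump a y ≤ 1 :=
    mul_le_one₀ (ContDiffBump.le_one _) (ContDiffBump.nonneg _) (ContDiffBump.le_one _)
  constructor <;> unfold bumpExponent <;> nlinarith

theorem bumpExponent_self (ha : 1 ≤ ‖a‖) (x : E) : bumpExponent q₀ q₁ a x x = q₀ := by
  rw [bumpExponent, standardBump_zero_mul_standardBump_eq_zero ha, mul_zero, add_zero]

theorem bumpExponent_eq_of_mem_ball {x y : E} (hx : x ∈ ball 0 (1/4)) (hy : y ∈ ball a (1/4)) :
    bumpExponent q₀ q₁ a x y = q₁ := by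
  rw [bumpExponent, standardBump_eq_one hx, standardBump_eq_one hy]
  ring

noncomputable def cutoffInvSqrtNorm (x : E) : ℝ := standardBump (0 : E) x * ‖x‖ ^ (-(1/2 : ℝ))

theorem cutoffInvSqrtNorm_nonneg (x : E) : 0 ≤ cutoffInvSqrtNorm x :=
  mul_nonneg (ContDiffBump.nonneg _) (Real.rpow_nonneg (norm_nonneg x) _)

theorem cutoffInvSqrtNorm_le (x : E) : cutoffInvSqrtNorm x ≤ ‖x‖ ^ (-(1/2 : ℝ)) :=
  mul_le_of_le_one_left (Real.rpow_nonneg (norm_nonneg x) _) (ContDiffBump.le_one _)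

theorem cutoffInvSqrtNorm_of_mem_ball {x : E} (hx : x ∈ ball 0 (1/4)) :
    cutoffInvSqrtNorm x = ‖x‖ ^ (-(1/2 : ℝ)) := by
  rw [cutoffInvSqrtNorm, standardBump_eq_one hx, one_mul]

theorem cutoffInvSqrtNorm_of_le_norm {x : E} (hx : 1/2 ≤ ‖x‖) : cutoffInvSqrtNorm x = 0 := by
  rw [cutoffInvSqrtNorm, standardBump_eq_zero (by rwa [dist_zero_right]), zero_mul]

theorem contDiffAt_cutoffInvSqrtNorm {k : ℕ∞} {x : E} (hx : x ≠ 0) :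
    ContDiffAt ℝ k cutoffInvSqrtNorm x :=
  (standardBump 0).contDiffAt.mul <|
    (contDiffAt_norm ℝ hx).rpow_const_of_ne (norm_ne_zero_iff.2 hx)

theorem fderiv_cutoffInvSqrtNorm_of_lt_norm {x : E} (hx : 1/2 < ‖x‖) :
    fderiv ℝ cutoffInvSqrtNorm x = 0 := by
  have hzero : cutoffInvSqrtNorm =ᶠ[𝓝 x] fun _ => (0 : ℝ) :=
    eventuallyEq_of_mem ((isOpen_lt continuous_const continuous_norm).mem_nhds hx)
      fun y hy => cutoffInvSqrtNorm_of_le_norm (le_of_lt hy)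
  rw [hzero.fderiv_eq, fderiv_const_apply]

theorem exists_norm_fderiv_cutoffInvSqrtNorm_le [FiniteDimensional ℝ E] :
    ∃ C, ∀ x : E, x ≠ 0 → ‖x‖ ≤ 1 →
      ‖fderiv ℝ cutoffInvSqrtNorm x‖ ≤ C * ‖x‖ ^ (-(3/2 : ℝ)) := by
  obtain ⟨B, hB⟩ : ∃ B, ∀ y : E, ‖fderiv ℝ (standardBump (0 : E)) y‖ ≤ B :=
    (((standardBump 0).contDiff (n := 1)).continuous_fderiv one_ne_zero
      ).bounded_above_of_compact_support ((standardBump 0).hasCompactSupport.fderiv (𝕜 := ℝ))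
  refine ⟨1/2 + B, fun x hx hx1 => ?_⟩
  have hpos : 0 < ‖x‖ := norm_pos_iff.2 hx
  have hsqrt : ‖x‖ ^ (-(1/2 : ℝ)) ≤ ‖x‖ ^ (-(3/2 : ℝ)) :=
    Real.rpow_le_rpow_of_exponent_ge hpos hx1 (by norm_num)
  calc ‖fderiv ℝ cutoffInvSqrtNorm x‖
      ≤ |standardBump (0 : E) x| * ‖fderiv ℝ (fun y : E => ‖y‖ ^ (-(1/2 : ℝ))) x‖
        + |‖x‖ ^ (-(1/2 : ℝ))| * ‖fderiv ℝ (standardBump (0 : E)) x‖ :=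
        norm_fderiv_mul_le ((standardBump 0).contDiffAt.differentiableAt one_ne_zero)
          (((contDiffAt_norm ℝ hx).rpow_const_of_ne (norm_ne_zero_iff.2 hx)).differentiableAt
            (n := 1) one_ne_zero)
    _ ≤ 1 * (|-(1/2 : ℝ)| * ‖x‖ ^ (-(1/2 : ℝ) - 1)) + ‖x‖ ^ (-(3/2 : ℝ)) * B := by
        rw [abs_of_nonneg (ContDiffBump.nonneg _), abs_of_nonneg (by positivity)]
        gcongr
        · exact ContDiffBump.le_one _
        · exact norm_fderiv_norm_rpow_le_of_ne_zero hx _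
        · exact hB x
    _ = (1/2 + B) * ‖x‖ ^ (-(3/2 : ℝ)) := by norm_num; ring

end Construction

section Integrability

variable {E : Type*} [NormedAddCommGroup E] [InnerProductSpace ℝ E] [FiniteDimensional ℝ E]
  [MeasurableSpace E] [BorelSpace E] [Nontrivial E] (μ : Measure E) [μ.IsAddHaarMeasure]

theorem lintegral_cutoffInvSqrtNorm_rpow_lt_top {q : ℝ} (hq : 0 < q)
    (hqd : q / 2 < Module.finrank ℝ E) :
    ∫⁻ x, ENNReal.ofReal (|cutoffInvSqrtNorm x| ^ q) ∂μ < ⊤ := by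
  refine lintegral_lt_top_of_le_norm_rpow_neg μ (C := 1) hqd one_pos (fun x _ _ => ?_)
    fun x hx => ?_
  · refine ENNReal.ofReal_le_ofReal ?_
    calc |cutoffInvSqrtNorm x| ^ q ≤ (‖x‖ ^ (-(1/2 : ℝ))) ^ q := by
          rw [abs_of_nonneg (cutoffInvSqrtNorm_nonneg x)]
          exact Real.rpow_le_rpow (cutoffInvSqrtNorm_nonneg x) (cutoffInvSqrtNorm_le x) hq.le
      _ = 1 * ‖x‖ ^ (-(q / 2)) := by rw [← Real.rpow_mul (norm_nonneg x)]; ring_nf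
  · rw [cutoffInvSqrtNorm_of_le_norm (by linarith), abs_zero, Real.zero_rpow hq.ne',
      ENNReal.ofReal_zero]

theorem lintegral_norm_gradient_cutoffInvSqrtNorm_rpow_lt_top {q : ℝ} (hq : 0 < q)
    (hqd : 3 * q / 2 < Module.finrank ℝ E) :
    ∫⁻ x, ENNReal.ofReal (‖gradient cutoffInvSqrtNorm x‖ ^ q) ∂μ < ⊤ := by
  obtain ⟨C, hC⟩ := exists_norm_fderiv_cutoffInvSqrtNorm_le (E := E)
  refine lintegral_lt_top_of_le_norm_rpow_neg μ (C := C ^ q) hqd one_pos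
    (fun x hx hx1 => ?_) fun x hx => ?_
  · have hbound := hC x hx hx1.le
    have hC0 : 0 ≤ C := nonneg_of_mul_nonneg_left ((norm_nonneg _).trans hbound)
      (Real.rpow_pos_of_pos (norm_pos_iff.2 hx) _)
    refine ENNReal.ofReal_le_ofReal ?_
    calc ‖gradient cutoffInvSqrtNorm x‖ ^ q ≤ (C * ‖x‖ ^ (-(3/2 : ℝ))) ^ q := by
          rw [norm_gradient_eq_norm_fderiv]
          exact Real.rpow_le_rpow (norm_nonneg _) hbound hq.le
      _ = C ^ q * ‖x‖ ^ (-(3 * q / 2)) := by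
          rw [Real.mul_rpow hC0 (by positivity), ← Real.rpow_mul (norm_nonneg x)]; ring_nf
  · rw [norm_gradient_eq_norm_fderiv, fderiv_cutoffInvSqrtNorm_of_lt_norm (by linarith),
      norm_zero, Real.zero_rpow hq.ne', ENNReal.ofReal_zero]

end Integrability

theorem setLIntegral_setLIntegral_eq_top_of_forall_le {α β : Type*} [MeasurableSpace α]
    [MeasurableSpace β] {μ : Measure α} {ν : Measure β} {s A : Set α} {t B : Set β}
    {F : α → β → ℝ≥0∞} {h : α → ℝ≥0∞} (hA : MeasurableSet A) (hB : MeasurableSet B)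
    (hAs : A ⊆ s) (hBt : B ⊆ t) (hνB : ν B ≠ 0) (hh : ∫⁻ x in A, h x ∂μ = ⊤)
    (hle : ∀ x ∈ A, ∀ y ∈ B, h x ≤ F x y) :
    ∫⁻ x in s, ∫⁻ y in t, F x y ∂ν ∂μ = ⊤ := by
  refine top_le_iff.1 ?_
  calc ⊤ = (∫⁻ x in A, h x ∂μ) * ν B := by rw [hh, ENNReal.top_mul hνB]
    _ ≤ ∫⁻ x in A, h x * ν B ∂μ := lintegral_mul_const_le _ _
    _ ≤ ∫⁻ x in A, ∫⁻ y in B, F x y ∂ν ∂μ := setLIntegral_mono' hA fun x hx => by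
          rw [← setLIntegral_const]; exact setLIntegral_mono' hB (hle x hx)
    _ ≤ _ := (lintegral_mono_set hAs).trans (lintegral_mono fun x => lintegral_mono_set hBt)

theorem inv_mul_norm_rpow_neg_le_cutoffInvSqrtNorm_quotient {E : Type*} [NormedAddCommGroup E]
    [InnerProductSpace ℝ E] {d s lam : ℝ} (hd : 0 ≤ d) (hs0 : 0 ≤ s) (hs1 : s ≤ 1)
    (hlam : 0 < lam) {a x y : E} (ha : ‖a‖ = 3/2) (hx : x ∈ ball 0 (1/4))
    (hy : y ∈ ball a (1/4)) :
    (lam ^ (2 * d) * 2 ^ (3 * d))⁻¹ * ‖x‖ ^ (-d) ≤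
      |cutoffInvSqrtNorm x / lam - cutoffInvSqrtNorm y / lam| ^ (2 * d) /
        ‖x - y‖ ^ (d + s * (2 * d)) := by
  rw [mem_ball_zero_iff] at hx
  rw [mem_ball_iff_norm] at hy
  have hy_norm : 5/4 < ‖y‖ := by linarith [norm_sub_norm_le a y, norm_sub_rev a y]
  have hxy : 0 < ‖x - y‖ := norm_pos_iff.2 <| sub_ne_zero.2 fun h => by rw [h] at hx; linarith
  have hxy2 : ‖x - y‖ ≤ 2 := by linarith [norm_sub_le x y, norm_sub_norm_le y a]
  have hnum : |cutoffInvSqrtNorm x / lam - cutoffInvSqrtNorm y / lam| ^ (2 * d) =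
      ‖x‖ ^ (-d) / lam ^ (2 * d) := by
    rw [cutoffInvSqrtNorm_of_le_norm (by linarith : (1/2 : ℝ) ≤ ‖y‖),
      cutoffInvSqrtNorm_of_mem_ball (mem_ball_zero_iff.2 hx), zero_div, sub_zero,
      abs_of_nonneg (by positivity), Real.div_rpow (by positivity) hlam.le,
      ← Real.rpow_mul (norm_nonneg x)]
    ring_nf
  have hden : ‖x - y‖ ^ (d + s * (2 * d)) ≤ 2 ^ (3 * d) :=
    calc ‖x - y‖ ^ (d + s * (2 * d)) ≤ 2 ^ (d + s * (2 * d)) :=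
          Real.rpow_le_rpow hxy.le hxy2 (by positivity)
      _ ≤ 2 ^ (3 * d) := Real.rpow_le_rpow_of_exponent_le one_le_two (by nlinarith)
  rw [hnum, div_div, inv_mul_eq_div]
  exact div_le_div_of_nonneg_left (by positivity) (by positivity)
    (mul_le_mul_of_nonneg_left hden (by positivity))

theorem sobolev_not_subset_fractional_general
    (n : ℕ) (hn : 2 ≤ n)
    (Ω : Set (EuclideanSpace ℝ (Fin n)))
    (hB : closedBall (0 : EuclideanSpace ℝ (Fin n)) 2 ⊆ Ω) :
    ∃ p : EuclideanSpace ℝ (Fin n) → EuclideanSpace ℝ (Fin n) → ℝ,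
      ContDiff ℝ (⊤ : ℕ∞) (Function.uncurry p) ∧
      (∃ pm pp : ℝ, 1 < pm ∧ ∀ x ∈ Ω, ∀ y ∈ Ω, pm ≤ p x y ∧ p x y ≤ pp) ∧
      (∃ c : ℝ, ∀ x ∈ Ω, p x x = c) ∧
      ∃ u : EuclideanSpace ℝ (Fin n) → ℝ,
        ContDiffOn ℝ (⊤ : ℕ∞) u (Ω \ {0}) ∧
        (∫⁻ x in Ω, ENNReal.ofReal (|u x| ^ p x x)) < ⊤ ∧
        (∫⁻ x in Ω \ {0}, ENNReal.ofReal (‖gradient u x‖ ^ p x x)) < ⊤ ∧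
        ∀ s ∈ Set.Ioo (0 : ℝ) 1, ∀ lam : ℝ, 0 < lam →
          varModular n Ω p s (fun x => u x / lam) = ⊤ := by
  have hfinrank : Module.finrank ℝ (EuclideanSpace ℝ (Fin n)) = n := finrank_euclideanSpace_fin
  have hn' : (2 : ℝ) ≤ n := by exact_mod_cast hn
  have : Nontrivial (EuclideanSpace ℝ (Fin n)) :=
    Module.nontrivial_of_finrank_pos (R := ℝ) (by omega)
  obtain ⟨a, ha⟩ := exists_norm_eq (EuclideanSpace ℝ (Fin n)) (by norm_num : (0 : ℝ) ≤ 3/2)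
  have hdiag : ∀ x, bumpExponent (6/5) (2 * n) a x x = 6/5 := bumpExponent_self (by linarith)
  refine ⟨bumpExponent (6/5) (2 * n) a, contDiff_bumpExponent,
    ⟨6/5, 2 * n, by norm_num, fun x _ y _ => bumpExponent_mem_Icc (by linarith) x y⟩,
    ⟨6/5, fun x _ => hdiag x⟩, cutoffInvSqrtNorm,
    fun x hx => (contDiffAt_cutoffInvSqrtNorm hx.2).contDiffWithinAt, ?_, ?_,
    fun s hs lam hlam => ?_⟩
  · simp only [hdiag]
    exact (setLIntegral_le_lintegral _ _).trans_lt <|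
      lintegral_cutoffInvSqrtNorm_rpow_lt_top volume (by norm_num) (by rw [hfinrank]; linarith)
  · simp only [hdiag]
    exact (setLIntegral_le_lintegral _ _).trans_lt <|
      lintegral_norm_gradient_cutoffInvSqrtNorm_rpow_lt_top volume (by norm_num)
        (by rw [hfinrank]; linarith)
  have hA : ball 0 (1/4) ⊆ Ω :=
    ball_subset_closedBall.trans ((closedBall_subset_closedBall (by norm_num)).trans hB)
  have hBa : ball a (1/4) ⊆ Ω := ball_subset_closedBall.trans
    ((closedBall_subset_closedBall' (by rw [dist_zero_right, ha]; norm_num)).trans hB)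
  have hc : (0 : ℝ) < (lam ^ (2 * (n : ℝ)) * 2 ^ (3 * (n : ℝ)))⁻¹ := by positivity
  rw [varModular]
  refine ENNReal.mul_eq_top.2 <| .inl ⟨(ENNReal.ofReal_pos.2 (mul_pos hs.1 (sub_pos.2 hs.2))).ne',
    setLIntegral_setLIntegral_eq_top_of_forall_le measurableSet_ball measurableSet_ball hA hBa
      (measure_ball_pos volume a (by norm_num)).ne'
      (setLIntegral_ball_norm_rpow_neg_finrank_eq_top volume (by norm_num) hc)
      fun x hx y hy => ?_⟩
  rw [hfinrank, bumpExponent_eq_of_mem_ball hx hy]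
  exact ENNReal.ofReal_le_ofReal <| inv_mul_norm_rpow_neg_le_cutoffInvSqrtNorm_quotient
    (by positivity) hs.1.le hs.2.le hlam ha hx hy

/-- **Theorem 1.2 (failure of the embedding, detailed form)**: on any open `Ω ⊇ B̄₂` in `ℝⁿ`,
`n ≥ 2`, there are a smooth variable exponent `p` satisfying (P) with `p̄(x) = p(x,x)` constant
and a function `u`, smooth away from the origin, with `u ∈ W^{1,p̄}(Ω)` but
`u ∉ W^{s,p(·,·)}(Ω)` for all `s ∈ (0,1)`. -/
theorem sobolev_not_subset_fractional
    (n : ℕ) (hn : 2 ≤ n)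
    (Ω : Set (EuclideanSpace ℝ (Fin n))) (hΩ : IsOpen Ω)
    (hB : closedBall (0 : EuclideanSpace ℝ (Fin n)) 2 ⊆ Ω) :
    ∃ p : EuclideanSpace ℝ (Fin n) → EuclideanSpace ℝ (Fin n) → ℝ,
      ContDiff ℝ (⊤ : ℕ∞) (Function.uncurry p) ∧
      (∃ pm pp : ℝ, 1 < pm ∧ ∀ x ∈ Ω, ∀ y ∈ Ω, pm ≤ p x y ∧ p x y ≤ pp) ∧
      (∃ c : ℝ, ∀ x ∈ Ω, p x x = c) ∧
      ∃ u : EuclideanSpace ℝ (Fin n) → ℝ,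
        ContDiffOn ℝ (⊤ : ℕ∞) u (Ω \ {0}) ∧
        (∫⁻ x in Ω, ENNReal.ofReal (|u x| ^ p x x)) < ⊤ ∧
        (∫⁻ x in Ω \ {0}, ENNReal.ofReal (‖gradient u x‖ ^ p x x)) < ⊤ ∧
        ∀ s ∈ Set.Ioo (0 : ℝ) 1, ∀ lam : ℝ, 0 < lam →
          varModular n Ω p s (fun x => u x / lam) = ⊤ :=
  sobolev_not_subset_fractional_general n hn Ω hB
end

section
/- Let n ≥ 1 be an integer, let Ω ⊆ ℝⁿ be an open set, let p : Ω × Ω → ℝ be measurable satisfying (P), and let s ∈ (0,1). Let u and u_k (k ∈ ℕ) be measurable functions on Ω with finite seminorms [u]_{s,p}, [u_k]_{s,p} < ∞. Then [u_k − u]_{s,p} → 0 as k → ∞ if and only if ϱ_{s,p}(u_k − u) → 0 as k → ∞; and if either holds, then ϱ_{s,p}(u_k) → ϱ_{s,p}(u) as k → ∞. -/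
open MeasureTheory Filter Metric Set
open scoped ENNReal Topology

/-- The Gagliardo seminorm `[u]_{s,p} = inf {λ > 0 : ϱ_{s,p}(u/λ) ≤ 1}`, valued in `[0,∞]`
with the convention `inf ∅ = +∞`. -/
noncomputable def wsSeminorm (n : ℕ) (Ω : Set (EuclideanSpace ℝ (Fin n)))
    (p : EuclideanSpace ℝ (Fin n) → EuclideanSpace ℝ (Fin n) → ℝ) (s : ℝ)
    (u : EuclideanSpace ℝ (Fin n) → ℝ) : ℝ≥0∞ :=
  sInf ((fun lam : ℝ => ENNReal.ofReal lam) ''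
    {lam : ℝ | 0 < lam ∧ varModular n Ω p s (fun x => u x / lam) ≤ 1})

/-!
A modular comparison `ϱ(f) ≤ a ϱ(g) + b ϱ(h)` follows from the same comparison of the numerators
`|f(x) - f(y)|^{p(x,y)}`. Since `p₋ ≤ p ≤ p₊`, this gives `ϱ(c v) ≤ c^{p₋} ϱ(v)` for `c ≤ 1` and
`ϱ(c v) ≤ c^{p₊} ϱ(v)` for `c ≥ 1`; hence `[v] < δ ≤ 1` forces `ϱ(v) ≤ δ^{p₋}`, while
`ϱ(v) ≤ e^{p₊}` with `e ≤ 1` forces `[v] ≤ e`, which gives the equivalence. For the convergence of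
the modulars, convexity of `t ↦ t^q` yields `ϱ(f + g) ≤ θ^{1-p₊} ϱ(f) + (1-θ)^{1-p₊} ϱ(g)` for
`θ ∈ (0,1)`; applied to `u_k = u + (u_k - u)` and `u = u_k + (u - u_k)` and letting `θ → 1`, it
squeezes `ϱ(u_k)` to `ϱ(u)`.
-/

namespace ENNReal

theorem tendsto_nhds_zero_of_forall_le_ofReal {ι : Type*} {l : Filter ι} {f : ι → ℝ≥0∞}
    (h : ∀ e : ℝ, 0 < e → e ≤ 1 → ∀ᶠ k in l, f k ≤ ENNReal.ofReal e) :
    Tendsto f l (𝓝 0) := by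
  refine ENNReal.tendsto_nhds_zero.2 fun ε hε => ?_
  obtain ⟨r, -, hr0, hrε⟩ := ENNReal.lt_iff_exists_real_btwn.1 hε
  have hr : 0 < r := ENNReal.ofReal_pos.1 hr0
  filter_upwards [h (min r 1) (lt_min hr one_pos) (min_le_right _ _)] with k hk
  exact hk.trans ((ENNReal.ofReal_le_ofReal (min_le_left _ _)).trans hrε.le)

theorem tendsto_of_le_mul_add {ι κ : Type*} {l : Filter ι} [l.NeBot] {L : Filter κ} [L.NeBot]
    {x d : ι → ℝ≥0∞} {a : ℝ≥0∞} {A B : κ → ℝ≥0∞}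
    (hA : Tendsto A L (𝓝 1)) (hB : ∀ θ, B θ ≠ ∞) (hd : Tendsto d l (𝓝 0))
    (hle : ∀ᶠ θ in L, ∀ k, x k ≤ A θ * a + B θ * d k ∧ a ≤ A θ * x k + B θ * d k) :
    Tendsto x l (𝓝 a) := by
  have hBd (θ : κ) : Tendsto (B θ * d ·) l (𝓝 0) := by
    simpa using ENNReal.Tendsto.const_mul hd (Or.inr (hB θ))
  have hAc (c : ℝ≥0∞) : Tendsto (A · * c) L (𝓝 c) := by
    simpa using ENNReal.Tendsto.mul_const hA (Or.inl one_ne_zero)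
  refine tendsto_of_le_liminf_of_limsup_le ?_ ?_
  · refine ge_of_tendsto (hAc _) ?_
    filter_upwards [hle, hA.eventually (gt_mem_nhds one_lt_top)] with θ hθ hAθ
    calc a = liminf (fun _ => a) l := liminf_const a |>.symm
      _ ≤ liminf ((A θ * x ·) + (B θ * d ·)) l :=
          liminf_le_liminf (Eventually.of_forall fun k => (hθ k).2)
      _ = liminf (A θ * x ·) l := liminf_add_of_right_tendsto_zero (hBd θ) _
      _ = A θ * liminf x l := liminf_const_mul_of_ne_top hAθ.ne
  · refine ge_of_tendsto (hAc a) ?_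
    filter_upwards [hle] with θ hθ
    calc limsup x l ≤ limsup ((fun _ => A θ * a) + (B θ * d ·)) l :=
          limsup_le_limsup (Eventually.of_forall fun k => (hθ k).1)
      _ = A θ * a := by rw [limsup_add_of_right_tendsto_zero (hBd θ), limsup_const]

end ENNReal

theorem Real.abs_add_rpow_le {q θ : ℝ} (hq : 1 ≤ q) (hθ0 : 0 < θ) (hθ1 : θ < 1) (a b : ℝ) :
    |a + b| ^ q ≤ θ ^ (1 - q) * |a| ^ q + (1 - θ) ^ (1 - q) * |b| ^ q := by
  have hθ1' : 0 < 1 - θ := sub_pos.2 hθ1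
  calc |a + b| ^ q ≤ (θ * (|a| / θ) + (1 - θ) * (|b| / (1 - θ))) ^ q := by
        refine Real.rpow_le_rpow (abs_nonneg _) ?_ (by linarith)
        rw [mul_div_cancel₀ _ hθ0.ne', mul_div_cancel₀ _ hθ1'.ne']
        exact abs_add_le a b
    _ ≤ θ * (|a| / θ) ^ q + (1 - θ) * (|b| / (1 - θ)) ^ q :=
        (convexOn_rpow hq).2 (by simp only [mem_Ici]; positivity)
          (by simp only [mem_Ici]; positivity) hθ0.le hθ1'.le (by ring)
    _ = θ ^ (1 - q) * |a| ^ q + (1 - θ) ^ (1 - q) * |b| ^ q := by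
        rw [Real.div_rpow (abs_nonneg _) hθ0.le, Real.div_rpow (abs_nonneg _) hθ1'.le,
          Real.rpow_sub hθ0, Real.rpow_sub hθ1', Real.rpow_one, Real.rpow_one]
        ring

theorem setLIntegral_le_add_of_le {α : Type*} [MeasurableSpace α] {μ : Measure α} {t : Set α}
    {f g h : α → ℝ≥0∞} (hg : Measurable g) (hh : Measurable h) {a b : ℝ≥0∞}
    (ha : a ≠ ∞) (hb : b ≠ ∞) (hfgh : ∀ x ∈ t, f x ≤ a * g x + b * h x) :
    ∫⁻ x in t, f x ∂μ ≤ a * ∫⁻ x in t, g x ∂μ + b * ∫⁻ x in t, h x ∂μ := by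
  calc ∫⁻ x in t, f x ∂μ ≤ ∫⁻ x in t, a * g x + b * h x ∂μ :=
        setLIntegral_mono ((hg.const_mul a).add (hh.const_mul b)) hfgh
    _ = a * ∫⁻ x in t, g x ∂μ + b * ∫⁻ x in t, h x ∂μ := by
        rw [lintegral_add_left (hg.const_mul a), lintegral_const_mul' a _ ha,
          lintegral_const_mul' b _ hb]

section Modular

variable {n : ℕ} {Ω : Set (EuclideanSpace ℝ (Fin n))}
  {p : EuclideanSpace ℝ (Fin n) → EuclideanSpace ℝ (Fin n) → ℝ} {s : ℝ}

noncomputable def gagliardoIntegrand (n : ℕ)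
    (p : EuclideanSpace ℝ (Fin n) → EuclideanSpace ℝ (Fin n) → ℝ) (s : ℝ)
    (f : EuclideanSpace ℝ (Fin n) → ℝ) (x y : EuclideanSpace ℝ (Fin n)) : ℝ≥0∞ :=
  ENNReal.ofReal (|f x - f y| ^ p x y / ‖x - y‖ ^ ((n : ℝ) + s * p x y))

theorem varModular_eq_lintegral (f : EuclideanSpace ℝ (Fin n) → ℝ) :
    varModular n Ω p s f =
      ENNReal.ofReal (s * (1 - s)) * ∫⁻ x in Ω, ∫⁻ y in Ω, gagliardoIntegrand n p s f x y :=
  rfl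

theorem measurable_gagliardoIntegrand (hp : Measurable (Function.uncurry p))
    {f : EuclideanSpace ℝ (Fin n) → ℝ} (hf : Measurable f) :
    Measurable (Function.uncurry (gagliardoIntegrand n p s f)) := by
  have hp' : Measurable fun z : EuclideanSpace ℝ (Fin n) × EuclideanSpace ℝ (Fin n) =>
      p z.1 z.2 := hp
  refine Measurable.ennreal_ofReal (Measurable.div ?_ ?_)
  · exact ((hf.comp measurable_fst).sub (hf.comp measurable_snd)).abs.pow hp'
  · exact (continuous_fst.sub continuous_snd).norm.measurable.pow
      (measurable_const.add (measurable_const.mul hp'))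

theorem varModular_le_add_of_le (hp : Measurable (Function.uncurry p))
    {f g h : EuclideanSpace ℝ (Fin n) → ℝ} (hg : Measurable g) (hh : Measurable h)
    {a b : ℝ} (ha : 0 ≤ a) (hb : 0 ≤ b)
    (hfgh : ∀ x ∈ Ω, ∀ y ∈ Ω,
      |f x - f y| ^ p x y ≤ a * |g x - g y| ^ p x y + b * |h x - h y| ^ p x y) :
    varModular n Ω p s f ≤
      ENNReal.ofReal a * varModular n Ω p s g + ENNReal.ofReal b * varModular n Ω p s h := by
  have hG := measurable_gagliardoIntegrand (s := s) hp hg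
  have hH := measurable_gagliardoIntegrand (s := s) hp hh
  have hpointwise : ∀ x ∈ Ω, ∀ y ∈ Ω, gagliardoIntegrand n p s f x y ≤
      ENNReal.ofReal a * gagliardoIntegrand n p s g x y +
        ENNReal.ofReal b * gagliardoIntegrand n p s h x y := by
    intro x hx y hy
    simp only [gagliardoIntegrand]
    rw [← ENNReal.ofReal_mul ha, ← ENNReal.ofReal_mul hb, ← ENNReal.ofReal_add (by positivity)
      (by positivity), mul_div_assoc', mul_div_assoc', ← add_div]
    exact ENNReal.ofReal_le_ofReal
      (div_le_div_of_nonneg_right (hfgh x hx y hy) (Real.rpow_nonneg (norm_nonneg _) _))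
  have hdouble : ∫⁻ x in Ω, ∫⁻ y in Ω, gagliardoIntegrand n p s f x y ≤
      ENNReal.ofReal a * (∫⁻ x in Ω, ∫⁻ y in Ω, gagliardoIntegrand n p s g x y) +
        ENNReal.ofReal b * ∫⁻ x in Ω, ∫⁻ y in Ω, gagliardoIntegrand n p s h x y :=
    setLIntegral_le_add_of_le hG.lintegral_prod_right' hH.lintegral_prod_right'
      ENNReal.ofReal_ne_top ENNReal.ofReal_ne_top fun x hx =>
        setLIntegral_le_add_of_le (hG.comp measurable_prodMk_left)
          (hH.comp measurable_prodMk_left) ENNReal.ofReal_ne_top ENNReal.ofReal_ne_top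
          (hpointwise x hx)
  rw [varModular_eq_lintegral, varModular_eq_lintegral, varModular_eq_lintegral]
  calc _ ≤ ENNReal.ofReal (s * (1 - s)) * (ENNReal.ofReal a *
          (∫⁻ x in Ω, ∫⁻ y in Ω, gagliardoIntegrand n p s g x y) +
        ENNReal.ofReal b * ∫⁻ x in Ω, ∫⁻ y in Ω, gagliardoIntegrand n p s h x y) := by gcongr
    _ = _ := by ring

theorem varModular_const_mul_le_of_le_one (hp : Measurable (Function.uncurry p)) {pm : ℝ}
    (hp_ge : ∀ x ∈ Ω, ∀ y ∈ Ω, pm ≤ p x y) {g : EuclideanSpace ℝ (Fin n) → ℝ}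
    (hg : Measurable g) {c : ℝ} (hc0 : 0 < c) (hc1 : c ≤ 1) :
    varModular n Ω p s (fun x => c * g x) ≤ ENNReal.ofReal (c ^ pm) * varModular n Ω p s g := by
  refine (varModular_le_add_of_le hp hg hg (Real.rpow_nonneg hc0.le pm) le_rfl (b := 0)
    fun x hx y hy => ?_).trans_eq (by simp)
  rw [← mul_sub, abs_mul, abs_of_pos hc0, Real.mul_rpow hc0.le (abs_nonneg _), zero_mul, add_zero]
  exact mul_le_mul_of_nonneg_right (Real.rpow_le_rpow_of_exponent_ge hc0 hc1 (hp_ge x hx y hy))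
    (Real.rpow_nonneg (abs_nonneg _) _)

theorem varModular_const_mul_le_of_one_le (hp : Measurable (Function.uncurry p)) {pp : ℝ}
    (hp_le : ∀ x ∈ Ω, ∀ y ∈ Ω, p x y ≤ pp) {g : EuclideanSpace ℝ (Fin n) → ℝ}
    (hg : Measurable g) {c : ℝ} (hc : 1 ≤ c) :
    varModular n Ω p s (fun x => c * g x) ≤ ENNReal.ofReal (c ^ pp) * varModular n Ω p s g := by
  have hc0 : 0 < c := zero_lt_one.trans_le hc
  refine (varModular_le_add_of_le hp hg hg (Real.rpow_nonneg hc0.le pp) le_rfl (b := 0)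
    fun x hx y hy => ?_).trans_eq (by simp)
  rw [← mul_sub, abs_mul, abs_of_pos hc0, Real.mul_rpow hc0.le (abs_nonneg _), zero_mul, add_zero]
  exact mul_le_mul_of_nonneg_right (Real.rpow_le_rpow_of_exponent_le hc (hp_le x hx y hy))
    (Real.rpow_nonneg (abs_nonneg _) _)

theorem varModular_add_le (hp : Measurable (Function.uncurry p)) {pp : ℝ}
    (hp_bound : ∀ x ∈ Ω, ∀ y ∈ Ω, 1 ≤ p x y ∧ p x y ≤ pp) {g h : EuclideanSpace ℝ (Fin n) → ℝ}
    (hg : Measurable g) (hh : Measurable h) {θ : ℝ} (hθ0 : 0 < θ) (hθ1 : θ < 1) :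
    varModular n Ω p s (fun x => g x + h x) ≤
      ENNReal.ofReal (θ ^ (1 - pp)) * varModular n Ω p s g +
        ENNReal.ofReal ((1 - θ) ^ (1 - pp)) * varModular n Ω p s h := by
  refine varModular_le_add_of_le hp hg hh (Real.rpow_pos_of_pos hθ0 _).le
    (Real.rpow_pos_of_pos (sub_pos.2 hθ1) _).le fun x hx y hy => ?_
  obtain ⟨hp1, hpp⟩ := hp_bound x hx y hy
  calc |g x + h x - (g y + h y)| ^ p x y
      = |(g x - g y) + (h x - h y)| ^ p x y := by ring_nf
    _ ≤ θ ^ (1 - p x y) * |g x - g y| ^ p x y + (1 - θ) ^ (1 - p x y) * |h x - h y| ^ p x y :=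
        Real.abs_add_rpow_le hp1 hθ0 hθ1 _ _
    _ ≤ θ ^ (1 - pp) * |g x - g y| ^ p x y + (1 - θ) ^ (1 - pp) * |h x - h y| ^ p x y := by
        gcongr ?_ * _ + ?_ * _
        · exact Real.rpow_le_rpow_of_exponent_ge hθ0 hθ1.le (by linarith)
        · exact Real.rpow_le_rpow_of_exponent_ge (by linarith) (by linarith) (by linarith)

theorem varModular_sub_comm (f g : EuclideanSpace ℝ (Fin n) → ℝ) :
    varModular n Ω p s (fun x => f x - g x) = varModular n Ω p s (fun x => g x - f x) := by
  rw [varModular_eq_lintegral, varModular_eq_lintegral]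
  refine congrArg _ (lintegral_congr fun x => lintegral_congr fun y => ?_)
  rw [gagliardoIntegrand, gagliardoIntegrand, ← abs_neg]
  ring_nf

theorem varModular_le_rpow_of_wsSeminorm_lt (hp : Measurable (Function.uncurry p)) {pm : ℝ}
    (hpm : 0 ≤ pm) (hp_ge : ∀ x ∈ Ω, ∀ y ∈ Ω, pm ≤ p x y) {v : EuclideanSpace ℝ (Fin n) → ℝ}
    (hv : Measurable v) {δ : ℝ} (hδ0 : 0 < δ) (hδ1 : δ ≤ 1)
    (h : wsSeminorm n Ω p s v < ENNReal.ofReal δ) :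
    varModular n Ω p s v ≤ ENNReal.ofReal (δ ^ pm) := by
  obtain ⟨-, ⟨μ, ⟨hμ0, hμ⟩, rfl⟩, hμδ⟩ := sInf_lt_iff.1 h
  have hμδ : μ < δ := (ENNReal.ofReal_lt_ofReal_iff hδ0).1 hμδ
  calc varModular n Ω p s v = varModular n Ω p s (fun x => μ * (v x / μ)) := by
        simp only [mul_div_cancel₀ _ hμ0.ne']
    _ ≤ ENNReal.ofReal (μ ^ pm) * varModular n Ω p s (fun x => v x / μ) :=
        varModular_const_mul_le_of_le_one hp hp_ge (hv.div_const μ) hμ0 (by linarith)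
    _ ≤ ENNReal.ofReal (μ ^ pm) * 1 := by gcongr
    _ ≤ ENNReal.ofReal (δ ^ pm) := by
        rw [mul_one]
        exact ENNReal.ofReal_le_ofReal (Real.rpow_le_rpow hμ0.le hμδ.le hpm)

theorem wsSeminorm_le_of_varModular_le (hp : Measurable (Function.uncurry p)) {pp : ℝ}
    (hp_le : ∀ x ∈ Ω, ∀ y ∈ Ω, p x y ≤ pp) {v : EuclideanSpace ℝ (Fin n) → ℝ}
    (hv : Measurable v) {e : ℝ} (he0 : 0 < e) (he1 : e ≤ 1)
    (h : varModular n Ω p s v ≤ ENNReal.ofReal (e ^ pp)) :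
    wsSeminorm n Ω p s v ≤ ENNReal.ofReal e := by
  refine sInf_le ⟨e, ⟨he0, ?_⟩, rfl⟩
  calc varModular n Ω p s (fun x => v x / e) = varModular n Ω p s (fun x => e⁻¹ * v x) := by
        simp only [div_eq_inv_mul]
    _ ≤ ENNReal.ofReal (e⁻¹ ^ pp) * varModular n Ω p s v :=
        varModular_const_mul_le_of_one_le hp hp_le hv ((one_le_inv₀ he0).2 he1)
    _ ≤ ENNReal.ofReal (e⁻¹ ^ pp) * ENNReal.ofReal (e ^ pp) := by gcongr
    _ = 1 := by
        rw [← ENNReal.ofReal_mul (by positivity), ← Real.mul_rpow (by positivity) he0.le,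
          inv_mul_cancel₀ he0.ne', Real.one_rpow, ENNReal.ofReal_one]

theorem tendsto_varModular_zero_of_tendsto_wsSeminorm {ι : Type*} {l : Filter ι}
    (hp : Measurable (Function.uncurry p)) {pm : ℝ} (hpm : 0 < pm)
    (hp_ge : ∀ x ∈ Ω, ∀ y ∈ Ω, pm ≤ p x y) {v : ι → EuclideanSpace ℝ (Fin n) → ℝ}
    (hv : ∀ k, Measurable (v k)) (h : Tendsto (fun k => wsSeminorm n Ω p s (v k)) l (𝓝 0)) :
    Tendsto (fun k => varModular n Ω p s (v k)) l (𝓝 0) := by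
  refine ENNReal.tendsto_nhds_zero_of_forall_le_ofReal fun e he he1 => ?_
  have hδ0 : 0 < e ^ pm⁻¹ := Real.rpow_pos_of_pos he _
  have hδe : (e ^ pm⁻¹) ^ pm = e := by
    rw [← Real.rpow_mul he.le, inv_mul_cancel₀ hpm.ne', Real.rpow_one]
  filter_upwards [(tendsto_order.1 h).2 _ (ENNReal.ofReal_pos.2 hδ0)] with k hk
  simpa only [hδe] using varModular_le_rpow_of_wsSeminorm_lt hp hpm.le hp_ge (hv k) hδ0
    (Real.rpow_le_one he.le he1 (inv_nonneg.2 hpm.le)) hk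

theorem tendsto_wsSeminorm_zero_of_tendsto_varModular {ι : Type*} {l : Filter ι}
    (hp : Measurable (Function.uncurry p)) {pp : ℝ} (hp_le : ∀ x ∈ Ω, ∀ y ∈ Ω, p x y ≤ pp)
    {v : ι → EuclideanSpace ℝ (Fin n) → ℝ} (hv : ∀ k, Measurable (v k))
    (h : Tendsto (fun k => varModular n Ω p s (v k)) l (𝓝 0)) :
    Tendsto (fun k => wsSeminorm n Ω p s (v k)) l (𝓝 0) := by
  refine ENNReal.tendsto_nhds_zero_of_forall_le_ofReal fun e he he1 => ?_
  filter_upwards [ENNReal.tendsto_nhds_zero.1 h _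
    (ENNReal.ofReal_pos.2 (Real.rpow_pos_of_pos he pp))] with k hk
  exact wsSeminorm_le_of_varModular_le hp hp_le (hv k) he he1 hk

theorem tendsto_varModular_of_tendsto_varModular_sub {ι : Type*} {l : Filter ι} [l.NeBot]
    (hp : Measurable (Function.uncurry p)) {pp : ℝ}
    (hp_bound : ∀ x ∈ Ω, ∀ y ∈ Ω, 1 ≤ p x y ∧ p x y ≤ pp) {u : EuclideanSpace ℝ (Fin n) → ℝ}
    (hu : Measurable u) {v : ι → EuclideanSpace ℝ (Fin n) → ℝ} (hv : ∀ k, Measurable (v k))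
    (h : Tendsto (fun k => varModular n Ω p s (fun x => v k x - u x)) l (𝓝 0)) :
    Tendsto (fun k => varModular n Ω p s (v k)) l (𝓝 (varModular n Ω p s u)) := by
  have hA : Tendsto (fun θ : ℝ => ENNReal.ofReal (θ ^ (1 - pp))) (𝓝[<] 1) (𝓝 1) := by
    simpa using (ENNReal.tendsto_ofReal
      ((Real.continuousAt_rpow_const 1 (1 - pp) (Or.inl one_ne_zero)).tendsto)).mono_left
        nhdsWithin_le_nhds
  refine ENNReal.tendsto_of_le_mul_add hA (B := fun θ => ENNReal.ofReal ((1 - θ) ^ (1 - pp)))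
    (fun _ => ENNReal.ofReal_ne_top) h ?_
  filter_upwards [Ioo_mem_nhdsLT zero_lt_one] with θ ⟨hθ0, hθ1⟩ k
  constructor
  · calc varModular n Ω p s (v k) = varModular n Ω p s (fun x => u x + (v k x - u x)) := by
          simp only [add_sub_cancel]
      _ ≤ _ := varModular_add_le (h := fun x => v k x - u x) hp hp_bound hu ((hv k).sub hu)
          hθ0 hθ1
  · calc varModular n Ω p s u = varModular n Ω p s (fun x => v k x + (u x - v k x)) := by
          simp only [add_sub_cancel]
      _ ≤ _ := varModular_add_le (h := fun x => u x - v k x) hp hp_bound (hv k) (hu.sub (hv k))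
          hθ0 hθ1
      _ = _ := by rw [varModular_sub_comm u]

end Modular

theorem modular_convergence_general
    (n : ℕ)
    (Ω : Set (EuclideanSpace ℝ (Fin n)))
    (p : EuclideanSpace ℝ (Fin n) → EuclideanSpace ℝ (Fin n) → ℝ)
    (hp_meas : Measurable (Function.uncurry p))
    (pm pp : ℝ) (hpm : 1 < pm)
    (hp_bound : ∀ x ∈ Ω, ∀ y ∈ Ω, pm ≤ p x y ∧ p x y ≤ pp)
    (s : ℝ)
    (u : EuclideanSpace ℝ (Fin n) → ℝ) (hu_meas : Measurable u)
    (uk : ℕ → EuclideanSpace ℝ (Fin n) → ℝ) (huk_meas : ∀ k, Measurable (uk k)) :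
    (Tendsto (fun k => wsSeminorm n Ω p s (fun x => uk k x - u x)) atTop (𝓝 0) ↔
      Tendsto (fun k => varModular n Ω p s (fun x => uk k x - u x)) atTop (𝓝 0)) ∧
    (Tendsto (fun k => varModular n Ω p s (fun x => uk k x - u x)) atTop (𝓝 0) →
      Tendsto (fun k => varModular n Ω p s (uk k)) atTop (𝓝 (varModular n Ω p s u))) := by
  have hdiff_meas (k : ℕ) : Measurable fun x => uk k x - u x := (huk_meas k).sub hu_meas
  have hp_bound_one : ∀ x ∈ Ω, ∀ y ∈ Ω, 1 ≤ p x y ∧ p x y ≤ pp := fun x hx y hy =>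
    ⟨hpm.le.trans (hp_bound x hx y hy).1, (hp_bound x hx y hy).2⟩
  refine ⟨⟨?_, ?_⟩, ?_⟩
  · exact tendsto_varModular_zero_of_tendsto_wsSeminorm hp_meas (zero_lt_one.trans hpm)
      (fun x hx y hy => (hp_bound x hx y hy).1) hdiff_meas
  · exact tendsto_wsSeminorm_zero_of_tendsto_varModular hp_meas
      (fun x hx y hy => (hp_bound x hx y hy).2) hdiff_meas
  · exact tendsto_varModular_of_tendsto_varModular_sub hp_meas hp_bound_one hu_meas huk_meas

/-- **Lemma 2.2 (modular convergence)**: for `u, u_k` with finite seminorms,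
`[u_k - u]_{s,p} → 0` iff `ϱ_{s,p}(u_k - u) → 0`, and in that case
`ϱ_{s,p}(u_k) → ϱ_{s,p}(u)`. -/
theorem modular_convergence
    (n : ℕ) (hn : 1 ≤ n)
    (Ω : Set (EuclideanSpace ℝ (Fin n))) (hΩ : IsOpen Ω)
    (p : EuclideanSpace ℝ (Fin n) → EuclideanSpace ℝ (Fin n) → ℝ)
    (hp_meas : Measurable (Function.uncurry p))
    (pm pp : ℝ) (hpm : 1 < pm) (hpmpp : pm ≤ pp)
    (hp_bound : ∀ x ∈ Ω, ∀ y ∈ Ω, pm ≤ p x y ∧ p x y ≤ pp)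
    (s : ℝ) (hs : s ∈ Set.Ioo (0 : ℝ) 1)
    (u : EuclideanSpace ℝ (Fin n) → ℝ) (hu_meas : Measurable u)
    (hu_fin : wsSeminorm n Ω p s u < ⊤)
    (uk : ℕ → EuclideanSpace ℝ (Fin n) → ℝ) (huk_meas : ∀ k, Measurable (uk k))
    (huk_fin : ∀ k, wsSeminorm n Ω p s (uk k) < ⊤) :
    (Tendsto (fun k => wsSeminorm n Ω p s (fun x => uk k x - u x)) atTop (𝓝 0) ↔
      Tendsto (fun k => varModular n Ω p s (fun x => uk k x - u x)) atTop (𝓝 0)) ∧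
    (Tendsto (fun k => varModular n Ω p s (fun x => uk k x - u x)) atTop (𝓝 0) →
      Tendsto (fun k => varModular n Ω p s (uk k)) atTop (𝓝 (varModular n Ω p s u))) :=
  modular_convergence_general n Ω p hp_meas pm pp hpm hp_bound s u hu_meas uk huk_meas
end

section
/- Let n ≥ 1 be an integer, let Ω ⊆ ℝⁿ be an open set, let p : Ω × Ω → ℝ be measurable satisfying (P), let s₀ ∈ (0,1), and let u : ℝⁿ → ℝ be a bounded measurable function with support contained in the ball B_{R/2} for some R > 2. Then for every x ∈ Ω \ B_R and every s ∈ [s₀, 1), s(1−s) ∫_Ω |u(x)−u(y)|^{p(x,y)} / |x−y|^{n+s·p(x,y)} dy ≤ |B_{R/2}| (‖u‖_∞^{p₊} + ‖u‖_∞^{p₋}) (2/|x|)^{n+s₀ p₋}, where |B_{R/2}| is the Lebesgue measure of the ball of radius R/2 and ‖u‖_∞ = sup_{ℝⁿ} |u|. -/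
/-! Since `u` vanishes outside `B_{R/2}` and `|x| ≥ R`, the integrand vanishes off `B_{R/2}`, while on
`B_{R/2}` the numerator is at most `‖u‖_∞^{p(x,y)} ≤ ‖u‖_∞^{p₊} + ‖u‖_∞^{p₋}` and
`|x - y| ≥ |x|/2 ≥ 1`, so the kernel is at most `(2/|x|)^{n + s₀ p₋}`. Integrating over `B_{R/2}`
and using `s(1 - s) ≤ 1` gives the bound. -/

open MeasureTheory Filter Metric Set
open scoped ENNReal Topology

theorem Real.rpow_le_rpow_add_rpow_of_mem_Icc {a M pm pp q : ℝ} (ha : 0 ≤ a) (haM : a ≤ M)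
    (hpm : 0 < pm) (hq : q ∈ Icc pm pp) : a ^ q ≤ M ^ pp + M ^ pm := by
  have hM : 0 ≤ M := ha.trans haM
  have haq : a ^ q ≤ M ^ q := Real.rpow_le_rpow ha haM (hpm.le.trans hq.1)
  rcases le_or_gt 1 M with hM1 | hM1
  · have := Real.rpow_le_rpow_of_exponent_le hM1 hq.2
    have := Real.rpow_nonneg hM pm
    linarith
  · rcases hM.eq_or_lt with rfl | hM0
    · have : a = 0 := le_antisymm haM ha
      subst this
      rw [Real.zero_rpow (hpm.trans_le hq.1).ne']
      positivity
    · have := Real.rpow_le_rpow_of_exponent_ge hM0 hM1.le hq.1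
      have := Real.rpow_nonneg hM pp
      linarith

theorem half_norm_rpow_le_norm_sub_rpow {E : Type*} [SeminormedAddCommGroup E] {x y : E}
    {e₀ e : ℝ} (hx : 2 ≤ ‖x‖) (hy : 2 * ‖y‖ ≤ ‖x‖) (he₀ : 0 ≤ e₀) (he : e₀ ≤ e) :
    (‖x‖ / 2) ^ e₀ ≤ ‖x - y‖ ^ e := by
  have hxy : ‖x‖ / 2 ≤ ‖x - y‖ := by linarith [norm_sub_norm_le x y]
  calc (‖x‖ / 2) ^ e₀ ≤ ‖x - y‖ ^ e₀ := Real.rpow_le_rpow (by positivity) hxy he₀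
    _ ≤ ‖x - y‖ ^ e := Real.rpow_le_rpow_of_exponent_le (by linarith) he

theorem abs_sub_rpow_div_norm_sub_rpow_le {E : Type*} [SeminormedAddCommGroup E] {u : E → ℝ}
    {M d s₀ s pm pp q : ℝ} {x y : E} (hM : ∀ z, |u z| ≤ M) (hux : u x = 0) (hx : 2 ≤ ‖x‖)
    (hy : 2 * ‖y‖ ≤ ‖x‖) (hd : 0 ≤ d) (hs₀ : 0 ≤ s₀) (hs : s₀ ≤ s) (hpm : 0 < pm)
    (hq : q ∈ Icc pm pp) :
    |u x - u y| ^ q / ‖x - y‖ ^ (d + s * q) ≤ (M ^ pp + M ^ pm) * (2 / ‖x‖) ^ (d + s₀ * pm) := by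
  have hnum : |u x - u y| ^ q ≤ M ^ pp + M ^ pm := by
    rw [hux, zero_sub, abs_neg]
    exact Real.rpow_le_rpow_add_rpow_of_mem_Icc (abs_nonneg _) (hM y) hpm hq
  have hexp : s₀ * pm ≤ s * q := mul_le_mul hs hq.1 hpm.le (hs₀.trans hs)
  have hden : (‖x‖ / 2) ^ (d + s₀ * pm) ≤ ‖x - y‖ ^ (d + s * q) :=
    half_norm_rpow_le_norm_sub_rpow hx hy (by positivity) (by linarith)
  have hx0 : 0 < ‖x‖ / 2 := by linarith
  calc |u x - u y| ^ q / ‖x - y‖ ^ (d + s * q)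
      ≤ (M ^ pp + M ^ pm) / (‖x‖ / 2) ^ (d + s₀ * pm) :=
        div_le_div₀ (hnum.trans' (by positivity)) hnum (by positivity) hden
    _ = (M ^ pp + M ^ pm) * (2 / ‖x‖) ^ (d + s₀ * pm) := by
        rw [div_eq_mul_inv, ← Real.inv_rpow hx0.le, inv_div]

theorem setLIntegral_le_measure_mul_of_le_indicator {α : Type*} [MeasurableSpace α]
    {μ : Measure α} {s t : Set α} {f : α → ℝ≥0∞} {c : ℝ≥0∞} (hs : MeasurableSet s)
    (ht : MeasurableSet t) (hf : ∀ y ∈ s, f y ≤ t.indicator (fun _ => c) y) :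
    ∫⁻ y in s, f y ∂μ ≤ μ t * c :=
  calc ∫⁻ y in s, f y ∂μ ≤ ∫⁻ y in s, t.indicator (fun _ => c) y ∂μ := setLIntegral_mono' hs hf
    _ ≤ ∫⁻ y, t.indicator (fun _ => c) y ∂μ := setLIntegral_le_lintegral _ _
    _ = μ t * c := by rw [lintegral_indicator_const ht, mul_comm]

theorem ENNReal.ofReal_mul_one_sub_le_one (s : ℝ) : ENNReal.ofReal (s * (1 - s)) ≤ 1 :=
  ENNReal.ofReal_le_one.2 (by nlinarith [sq_nonneg (s - 1 / 2)])

theorem Fs_decay_bound_general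
    (n : ℕ)
    (Ω : Set (EuclideanSpace ℝ (Fin n))) (hΩ : IsOpen Ω)
    (p : EuclideanSpace ℝ (Fin n) → EuclideanSpace ℝ (Fin n) → ℝ)
    (pm pp : ℝ) (hpm : 1 < pm)
    (hp_bound : ∀ x ∈ Ω, ∀ y ∈ Ω, pm ≤ p x y ∧ p x y ≤ pp)
    (s₀ : ℝ) (hs₀ : s₀ ∈ Set.Ioo (0 : ℝ) 1)
    (R : ℝ) (hR : 2 < R)
    (u : EuclideanSpace ℝ (Fin n) → ℝ)
    (hu_bdd : BddAbove (Set.range fun z => |u z|))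
    (hu_supp : Function.support u ⊆ ball (0 : EuclideanSpace ℝ (Fin n)) (R / 2)) :
    ∀ x ∈ Ω \ ball (0 : EuclideanSpace ℝ (Fin n)) R, ∀ s : ℝ, s₀ ≤ s → s < 1 →
      ENNReal.ofReal (s * (1 - s)) *
          (∫⁻ y in Ω, ENNReal.ofReal
            (|u x - u y| ^ p x y / ‖x - y‖ ^ ((n : ℝ) + s * p x y))) ≤
        ENNReal.ofReal
          ((volume (ball (0 : EuclideanSpace ℝ (Fin n)) (R / 2))).toReal *
            ((⨆ z, |u z|) ^ pp + (⨆ z, |u z|) ^ pm) *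
            (2 / ‖x‖) ^ ((n : ℝ) + s₀ * pm)) := by
  rintro x ⟨hxΩ, hxR⟩ s hs _
  rw [mem_ball, dist_zero_right, not_lt] at hxR
  have hu_zero : ∀ y, R / 2 ≤ ‖y‖ → u y = 0 := fun y hy ↦
    Function.notMem_support.1 fun h ↦ (mem_ball_zero_iff.1 (hu_supp h)).not_ge hy
  have hux : u x = 0 := hu_zero x (by linarith)
  have hpt : ∀ y ∈ Ω, ENNReal.ofReal (|u x - u y| ^ p x y / ‖x - y‖ ^ ((n : ℝ) + s * p x y)) ≤
      (ball 0 (R / 2)).indicator (fun _ ↦ ENNReal.ofReal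
        (((⨆ z, |u z|) ^ pp + (⨆ z, |u z|) ^ pm) * (2 / ‖x‖) ^ ((n : ℝ) + s₀ * pm))) y := by
    intro y hy
    have hq := hp_bound x hxΩ y hy
    by_cases hyB : y ∈ ball (0 : EuclideanSpace ℝ (Fin n)) (R / 2)
    · rw [indicator_of_mem hyB]
      rw [mem_ball_zero_iff] at hyB
      exact ENNReal.ofReal_le_ofReal <| abs_sub_rpow_div_norm_sub_rpow_le (le_ciSup hu_bdd) hux
        (by linarith) (by linarith) n.cast_nonneg hs₀.1.le hs (by linarith) hq
    · rw [indicator_of_notMem hyB, hux, hu_zero y (not_lt.1 (mt mem_ball_zero_iff.2 hyB)),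
        sub_zero, abs_zero, Real.zero_rpow (by linarith [hq.1]), zero_div, ENNReal.ofReal_zero]
  calc _ ≤ 1 * (volume (ball (0 : EuclideanSpace ℝ (Fin n)) (R / 2)) * _) :=
        mul_le_mul' (ENNReal.ofReal_mul_one_sub_le_one s)
          (setLIntegral_le_measure_mul_of_le_indicator hΩ.measurableSet measurableSet_ball hpt)
    _ = _ := by
      rw [one_mul, mul_assoc, ENNReal.ofReal_mul ENNReal.toReal_nonneg,
        ENNReal.ofReal_toReal measure_ball_lt_top.ne]

/-- **Decay bound in Lemma 3.3**: if `u` is bounded measurable with support in `B_{R/2}`,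
`R > 2`, then for `x ∈ Ω \ B_R` and `s ∈ [s₀, 1)`,
`s(1-s) ∫_Ω |u(x)-u(y)|^{p(x,y)}/|x-y|^{n+sp(x,y)} dy
  ≤ |B_{R/2}| (‖u‖_∞^{p₊} + ‖u‖_∞^{p₋}) (2/|x|)^{n+s₀p₋}`. -/
theorem Fs_decay_bound
    (n : ℕ) (hn : 1 ≤ n)
    (Ω : Set (EuclideanSpace ℝ (Fin n))) (hΩ : IsOpen Ω)
    (p : EuclideanSpace ℝ (Fin n) → EuclideanSpace ℝ (Fin n) → ℝ)
    (hp_meas : Measurable (Function.uncurry p))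
    (pm pp : ℝ) (hpm : 1 < pm) (hpmpp : pm ≤ pp)
    (hp_bound : ∀ x ∈ Ω, ∀ y ∈ Ω, pm ≤ p x y ∧ p x y ≤ pp)
    (s₀ : ℝ) (hs₀ : s₀ ∈ Set.Ioo (0 : ℝ) 1)
    (R : ℝ) (hR : 2 < R)
    (u : EuclideanSpace ℝ (Fin n) → ℝ) (hu_meas : Measurable u)
    (hu_bdd : BddAbove (Set.range fun z => |u z|))
    (hu_supp : Function.support u ⊆ ball (0 : EuclideanSpace ℝ (Fin n)) (R / 2)) :
    ∀ x ∈ Ω \ ball (0 : EuclideanSpace ℝ (Fin n)) R, ∀ s : ℝ, s₀ ≤ s → s < 1 →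
      ENNReal.ofReal (s * (1 - s)) *
          (∫⁻ y in Ω, ENNReal.ofReal
            (|u x - u y| ^ p x y / ‖x - y‖ ^ ((n : ℝ) + s * p x y))) ≤
        ENNReal.ofReal
          ((volume (ball (0 : EuclideanSpace ℝ (Fin n)) (R / 2))).toReal *
            ((⨆ z, |u z|) ^ pp + (⨆ z, |u z|) ^ pm) *
            (2 / ‖x‖) ^ ((n : ℝ) + s₀ * pm)) :=
  Fs_decay_bound_general n Ω hΩ p pm pp hpm hp_bound s₀ hs₀ R hR u hu_bdd hu_supp
end
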